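/- arXiv:2001.07943 — 8 statements merged into one kernel-verified Lean document; each statement's English description precedes it below -/
import Mathlib

section
/- Let α, β, ρ, σ : ℝ → ℝ be continuous, λ ∈ ℝ, λ ≠ 0, and define a(u) = ∫₀ᵘ α, b(u) = ∫₀ᵘ β, c(u) = ∫₀ᵘ aβ, r(v) = ∫₀ᵛ ρ, s(v) = ∫₀ᵛ σ, t(v) = ∫₀ᵛ rσ, and F₊(u) = [[1,0,0],[λb(u),1,0],[λ²c(u),λa(u),1]], G₋(v) = [[1,λ⁻¹s(v),0],[0,1,0],[λ⁻¹r(v),λ⁻²t(v),1]]. Fix (u, v) with 1 − b(u)s(v) ≠ 0 and write b = b(u), etc. Define V₊ = [[1, 0, 0], [λ b(1−bs)⁻¹, 1, 0], [λ² c(1−bs)⁻¹, λ(a(1−bs)+cs), 1]] and V₋ = [[(1−bs)⁻¹, λ⁻¹ s, 0], [0, 1−bs, 0], [λ⁻¹(r + bt(1−bs)⁻¹), λ⁻² t, 1]]. Then F₊(u) · V₋ = G₋(v) · V₊ (equivalently, G₋(v)⁻¹ F₊(u) = V₊ V₋⁻¹), and det V₊ = det V₋ = 1. -/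
/-- Explicit Birkhoff decomposition `G₋⁻¹ F₊ = V₊ V₋⁻¹` on the big cell `1 − b(u)s(v) ≠ 0`
for the loop group construction of indefinite improper affine spheres. -/
theorem stmt3 (α β ρ σ : ℝ → ℝ) (hα : Continuous α) (hβ : Continuous β)
    (hρ : Continuous ρ) (hσ : Continuous σ) (lam : ℝ) (hlam : lam ≠ 0)
    (a b c r s t : ℝ → ℝ)
    (ha : ∀ u, a u = ∫ k in (0:ℝ)..u, α k)
    (hb : ∀ u, b u = ∫ k in (0:ℝ)..u, β k)
    (hc : ∀ u, c u = ∫ k in (0:ℝ)..u, a k * β k)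
    (hr : ∀ v, r v = ∫ k in (0:ℝ)..v, ρ k)
    (hs : ∀ v, s v = ∫ k in (0:ℝ)..v, σ k)
    (ht : ∀ v, t v = ∫ k in (0:ℝ)..v, r k * σ k)
    (Fp Gm : ℝ → Matrix (Fin 3) (Fin 3) ℝ)
    (hFp : ∀ u, Fp u = !![1, 0, 0;
                          lam * b u, 1, 0;
                          lam ^ 2 * c u, lam * a u, 1])
    (hGm : ∀ v, Gm v = !![1, lam⁻¹ * s v, 0;
                          0, 1, 0;
                          lam⁻¹ * r v, lam⁻¹ ^ 2 * t v, 1])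
    (u v : ℝ) (hbs : 1 - b u * s v ≠ 0)
    (Vp Vm : Matrix (Fin 3) (Fin 3) ℝ)
    (hVp : Vp = !![1, 0, 0;
                   lam * (b u * (1 - b u * s v)⁻¹), 1, 0;
                   lam ^ 2 * (c u * (1 - b u * s v)⁻¹),
                     lam * (a u * (1 - b u * s v) + c u * s v), 1])
    (hVm : Vm = !![(1 - b u * s v)⁻¹, lam⁻¹ * s v, 0;
                   0, 1 - b u * s v, 0;
                   lam⁻¹ * (r v + b u * t v * (1 - b u * s v)⁻¹), lam⁻¹ ^ 2 * t v, 1]) :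
    Fp u * Vm = Gm v * Vp ∧ (Gm v)⁻¹ * Fp u = Vp * Vm⁻¹ ∧
      Vp.det = 1 ∧ Vm.det = 1 := by

  have hbs' : b u * s v ≠ 1 := fun h => hbs (by rw [h]; ring)
  have h1 : Fp u * Vm = Gm v * Vp := by
    rw [hFp, hGm, hVp, hVm]
    ext i j
    fin_cases i <;> fin_cases j <;>
      simp [Matrix.mul_apply, Fin.sum_univ_three] <;> field_simp <;> ring
  have hdVm : Vm.det = 1 := by
    rw [hVm, Matrix.det_fin_three]
    simp
    field_simp
  have hdVp : Vp.det = 1 := by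
    rw [hVp, Matrix.det_fin_three]
    simp
  have hdGm : (Gm v).det = 1 := by
    rw [hGm, Matrix.det_fin_three]
    simp
  have hGu : IsUnit (Gm v).det := by rw [hdGm]; exact isUnit_one
  have hVu : IsUnit Vm.det := by rw [hdVm]; exact isUnit_one
  refine ⟨h1, ?_, hdVp, hdVm⟩
  have : Fp u = Gm v * Vp * Vm⁻¹ := by
    rw [← h1, Matrix.mul_nonsing_inv_cancel_right _ _ hVu]
  rw [this, ← Matrix.mul_assoc, ← Matrix.mul_assoc,
    Matrix.nonsing_inv_mul _ hGu, Matrix.one_mul]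
end

section
/- Let α, ρ : ℝ → ℝ be C¹ functions and β, σ : ℝ → ℝ be continuous. Define b(u) = ∫₀ᵘ β(k)dk and s(v) = ∫₀ᵛ σ(k)dk, and set ω(u,v) = (1 − b(u)s(v)) α(u) ρ(v), A(u) = α(u)² β(u), B(v) = ρ(v)² σ(v). Then ω(u,v) · ∂_u∂_v ω(u,v) − (∂_u ω(u,v))(∂_v ω(u,v)) + A(u) B(v) = 0 for all (u,v) ∈ ℝ²; equivalently, ∂_u∂_v log ω + A B ω⁻² = 0 wherever ω > 0. -/
/-!
Write `ω(u, v) = f(u) g(v) − F(u) G(v)` with `f = α`, `F = bα`, `g = ρ`, `G = sρ`. For any such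
rank-two separable function, `ω ∂_u∂_vω − ∂_uω ∂_vω = −W(f, F)(u) · W(g, G)(v)`, where
`W(f, F) = f F' − f' F` is the Wronskian; and `W(α, bα) = α² b' = α²β = A`,
`W(ρ, sρ) = ρ² s' = ρ²σ = B` by the fundamental theorem of calculus. The logarithmic form
follows from `∂_u∂_v log ω = (ω ∂_u∂_vω − ∂_uω ∂_vω) / ω²` where `ω ≠ 0`.
-/

open Filter Topology

noncomputable section

namespace Liouville

def liouvilleExpr (ω : ℝ → ℝ → ℝ) (u v : ℝ) : ℝ :=
  ω u v * deriv (fun u' => deriv (fun v' => ω u' v') v) u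
    - deriv (fun u' => ω u' v) u * deriv (fun v' => ω u v') v

def wronskian (f F : ℝ → ℝ) (x : ℝ) : ℝ :=
  f x * deriv F x - deriv f x * F x

theorem wronskian_mul_self {f b : ℝ → ℝ} {x b' : ℝ} (hf : DifferentiableAt ℝ f x)
    (hb : HasDerivAt b b' x) : wronskian f (fun y => b y * f y) x = f x ^ 2 * b' := by
  rw [wronskian, (hb.fun_mul hf.hasDerivAt).deriv]
  ring

theorem deriv_deriv_log_eq_liouvilleExpr_div {ω : ℝ → ℝ → ℝ} {u v : ℝ}
    (hv : ∀ᶠ u' in 𝓝 u, DifferentiableAt ℝ (fun v' => ω u' v') v)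
    (hu : DifferentiableAt ℝ (fun u' => ω u' v) u)
    (huv : DifferentiableAt ℝ (fun u' => deriv (fun v' => ω u' v') v) u) (hne : ω u v ≠ 0) :
    deriv (fun u' => deriv (fun v' => Real.log (ω u' v')) v) u
      = liouvilleExpr ω u v / ω u v ^ 2 := by
  have hne' : ∀ᶠ u' in 𝓝 u, ω u' v ≠ 0 := hu.continuousAt.eventually_ne hne
  have hlog : (fun u' => deriv (fun v' => Real.log (ω u' v')) v)
      =ᶠ[𝓝 u] fun u' => deriv (fun v' => ω u' v') v / ω u' v := by
    filter_upwards [hv, hne'] with u' hd h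
    exact (hd.hasDerivAt.log h).deriv
  rw [hlog.deriv_eq, (huv.hasDerivAt.fun_div hu.hasDerivAt hne).deriv, liouvilleExpr]
  ring

section Separable

variable {f F g G : ℝ → ℝ}

theorem deriv_const_mul_sub_const_mul (x : ℝ) (hg : DifferentiableAt ℝ g x)
    (hG : DifferentiableAt ℝ G x) (a c : ℝ) :
    deriv (fun y => a * g y - c * G y) x = a * deriv g x - c * deriv G x :=
  ((hg.hasDerivAt.const_mul a).sub (hG.hasDerivAt.const_mul c)).deriv

theorem liouvilleExpr_sub_mul {u v : ℝ} (hf : DifferentiableAt ℝ f u)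
    (hF : DifferentiableAt ℝ F u) (hg : DifferentiableAt ℝ g v) (hG : DifferentiableAt ℝ G v) :
    liouvilleExpr (fun u v => f u * g v - F u * G v) u v
      = -(wronskian f F u * wronskian g G v) := by
  have h_v : ∀ u', deriv (fun v' => f u' * g v' - F u' * G v') v
      = f u' * deriv g v - F u' * deriv G v :=
    fun u' => deriv_const_mul_sub_const_mul v hg hG (f u') (F u')
  have h_u : deriv (fun u' => f u' * g v - F u' * G v) u
      = deriv f u * g v - deriv F u * G v := by
    simpa only [mul_comm] using deriv_const_mul_sub_const_mul u hf hF (g v) (G v)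
  have h_uv : deriv (fun u' => f u' * deriv g v - F u' * deriv G v) u
      = deriv f u * deriv g v - deriv F u * deriv G v := by
    simpa only [mul_comm] using deriv_const_mul_sub_const_mul u hf hF (deriv g v) (deriv G v)
  simp only [liouvilleExpr, h_v, h_u, h_uv, wronskian]
  ring

theorem deriv_deriv_log_sub_mul {u v : ℝ} (hf : Differentiable ℝ f)
    (hF : Differentiable ℝ F) (hg : DifferentiableAt ℝ g v) (hG : DifferentiableAt ℝ G v)
    (hne : f u * g v - F u * G v ≠ 0) :
    deriv (fun u' => deriv (fun v' => Real.log (f u' * g v' - F u' * G v')) v) u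
      = -(wronskian f F u * wronskian g G v) / (f u * g v - F u * G v) ^ 2 := by
  have h_v : (fun u' => deriv (fun v' => f u' * g v' - F u' * G v') v)
      = fun u' => f u' * deriv g v - F u' * deriv G v :=
    funext fun u' => deriv_const_mul_sub_const_mul v hg hG (f u') (F u')
  rw [← liouvilleExpr_sub_mul (hf u) (hF u) hg hG]
  refine deriv_deriv_log_eq_liouvilleExpr_div (ω := fun u v => f u * g v - F u * G v)
    (Eventually.of_forall fun u' =>
      ((differentiableAt_const _).mul hg).sub ((differentiableAt_const _).mul hG))
    (by fun_prop) ?_ hne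
  rw [h_v]
  fun_prop

end Separable

end Liouville

end

open Liouville in
/-- The data `ω = (1 − b(u)s(v)) α(u) ρ(v)`, `A = α²β`, `B = ρ²σ` solves the Liouville
equation `ω ∂_u∂_vω − ∂_uω ∂_vω + AB = 0` (equivalently `∂_u∂_v log ω + ABω⁻² = 0`
wherever `ω > 0`). -/
theorem stmt4 (α ρ : ℝ → ℝ) (hα : ContDiff ℝ 1 α) (hρ : ContDiff ℝ 1 ρ)
    (β σ : ℝ → ℝ) (hβ : Continuous β) (hσ : Continuous σ)
    (b s : ℝ → ℝ)
    (hb : ∀ u, b u = ∫ k in (0:ℝ)..u, β k)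
    (hs : ∀ v, s v = ∫ k in (0:ℝ)..v, σ k)
    (ω : ℝ → ℝ → ℝ) (A B : ℝ → ℝ)
    (hω : ∀ u v, ω u v = (1 - b u * s v) * α u * ρ v)
    (hA : ∀ u, A u = α u ^ 2 * β u) (hB : ∀ v, B v = ρ v ^ 2 * σ v) :
    (∀ u v : ℝ,
      ω u v * deriv (fun u' => deriv (fun v' => ω u' v') v) u
        - deriv (fun u' => ω u' v) u * deriv (fun v' => ω u v') v
        + A u * B v = 0) ∧
    (∀ u v : ℝ, 0 < ω u v →
      deriv (fun u' => deriv (fun v' => Real.log (ω u' v')) v) u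
        + A u * B v / (ω u v) ^ 2 = 0) := by
  have hα' := hα.differentiable one_ne_zero
  have hρ' := hρ.differentiable one_ne_zero
  have hb' : ∀ u, HasDerivAt b (β u) u := fun u => by
    simpa only [← funext hb] using (hβ.integral_hasStrictDerivAt 0 u).hasDerivAt
  have hs' : ∀ v, HasDerivAt s (σ v) v := fun v => by
    simpa only [← funext hs] using (hσ.integral_hasStrictDerivAt 0 v).hasDerivAt
  have hbα : Differentiable ℝ (fun u => b u * α u) := fun u =>
    (hb' u).differentiableAt.mul (hα' u)
  have hsρ : Differentiable ℝ (fun v => s v * ρ v) := fun v =>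
    (hs' v).differentiableAt.mul (hρ' v)
  have hω_sep : ω = fun u v => α u * ρ v - (b u * α u) * (s v * ρ v) := by
    ext u v
    rw [hω]
    ring
  have hAB : ∀ u v, wronskian α (fun u => b u * α u) u * wronskian ρ (fun v => s v * ρ v) v
      = A u * B v := fun u v => by
    rw [wronskian_mul_self (hα' u) (hb' u), wronskian_mul_self (hρ' v) (hs' v), hA, hB]
  subst hω_sep
  refine ⟨fun u v => ?_, fun u v hpos => ?_⟩
  · show liouvilleExpr (fun u v => α u * ρ v - b u * α u * (s v * ρ v)) u v + A u * B v = 0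
    rw [liouvilleExpr_sub_mul (hα' u) (hbα u) (hρ' v) (hsρ v), hAB]
    ring
  · rw [deriv_deriv_log_sub_mul hα' hbα (hρ' v) (hsρ v) hpos.ne', hAB]
    ring
end

section
/- Let γ₁ : I₁ → ℝ² and γ₂ : I₂ → ℝ² be C² curves on open intervals containing 0, and define f : I₁ × I₂ → ℝ³ by f(u,v) = (γ₁(u) + γ₂(v), z(u,v)), where z(u,v) = det[γ₁(u), γ₂(v)] + ∫₀ᵘ det[γ₁(k), γ₁′(k)]dk − ∫₀ᵛ det[γ₂(k), γ₂′(k)]dk. Set ω(u,v) = det[γ₁′(u), γ₂′(v)], A(u) = det[γ₁′(u), γ₁″(u)], B(v) = det[γ₂″(v), γ₂′(v)], and e₃ = (0,0,1) ∈ ℝ³. Then: (a) ∂_u∂_v f = ω · e₃ everywhere on I₁ × I₂; (b) det[∂_u f, ∂_v f, e₃] = ω everywhere (3×3 determinant of the columns ∂_u f, ∂_v f, e₃); (c) at every point where ω ≠ 0, ω · ∂_u² f = det[γ₁″(u), γ₂′(v)] · ∂_u f + A(u) · ∂_v f and ω · ∂_v² f = B(v) · ∂_u f + det[γ₁′(u),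 γ₂″(v)] · ∂_v f. Hence wherever ω ≠ 0, f satisfies the Blaschke structure equations of an indefinite improper affine sphere in asymptotic coordinates with constant affine normal e₃, affine metric 2ω du dv and cubic form A du³ + B dv³. -/
/-- Determinant of the `2×2` matrix with columns `a`, `b` in `ℝ²`. -/
def det2 (a b : ℝ × ℝ) : ℝ := a.1 * b.2 - a.2 * b.1

/-!
With `w = γ₂(v) - γ₁(u)`, both first derivatives of `f` are values of the linear map
`c ↦ (c, det[c, w])`: `∂_u f = (γ₁', det[γ₁', w])` and `∂_v f = (γ₂', det[γ₂', w])`, because the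
integral terms of `z` contribute `det[γ₁, γ₁'] = -det[γ₁', γ₁]` and `-det[γ₂, γ₂']`. Differentiating
once more, `∂_u² f` and `∂_v² f` are again of this form (with `γ₁''`, resp. `γ₂''`), since
`det[γ₁', ∂_u w] = -det[γ₁', γ₁'] = 0`, while `∂_u ∂_v f` only sees the derivative of `w`, which
gives `det[γ₁', γ₂'] e₃`. The Gauss equations are then Cramer's rule
`det[a, b] c = det[c, b] a + det[a, c] b` in `ℝ²`, transported by that linear map.
-/

open intervalIntegral Filter Topology

def vec3 (p : ℝ × ℝ) (h : ℝ) : Fin 3 → ℝ := ![p.1, p.2, h]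

lemma det2_smul_vec3 (a b c w : ℝ × ℝ) :
    det2 a b • vec3 c (det2 c w) = det2 c b • vec3 a (det2 a w) + det2 a c • vec3 b (det2 b w) := by
  ext i; fin_cases i <;> simp [vec3, det2] <;> ring

lemma vec3_zero_left (h : ℝ) : vec3 0 h = h • ![0, 0, 1] := by
  ext i; fin_cases i <;> simp [vec3]

lemma det_vec3_vec3_e3 (a b : ℝ × ℝ) (s t : ℝ) :
    (Matrix.of fun i j => (![vec3 a s, vec3 b t, ![0, 0, 1]] j) i).det = det2 a b := by
  simp [Matrix.det_fin_three, vec3, det2]; ring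

section Derivatives

variable {g : ℝ → ℝ × ℝ} {g' : ℝ × ℝ} {t : ℝ}

lemma HasDerivAt.fst (hg : HasDerivAt g g' t) : HasDerivAt (fun t => (g t).1) g'.1 t := by
  simpa using hg.hasFDerivAt.fst.hasDerivAt

lemma HasDerivAt.snd (hg : HasDerivAt g g' t) : HasDerivAt (fun t => (g t).2) g'.2 t := by
  simpa using hg.hasFDerivAt.snd.hasDerivAt

lemma HasDerivAt.vec3 {h : ℝ → ℝ} {h' : ℝ} (hg : HasDerivAt g g' t) (hh : HasDerivAt h h' t) :
    HasDerivAt (fun t => vec3 (g t) (h t)) (vec3 g' h') t := by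
  refine hasDerivAt_pi.2 fun i => ?_
  fin_cases i
  exacts [hg.fst, hg.snd, hh]

lemma HasDerivAt.det2 {k : ℝ → ℝ × ℝ} {k' : ℝ × ℝ} (hg : HasDerivAt g g' t)
    (hk : HasDerivAt k k' t) :
    HasDerivAt (fun t => det2 (g t) (k t)) (det2 g' (k t) + det2 (g t) k') t := by
  have := (hg.fst.mul hk.snd).sub (hg.snd.mul hk.fst)
  exact this.congr_deriv (by simp only [_root_.det2]; ring)

lemma ContinuousOn.det2 {k : ℝ → ℝ × ℝ} {s : Set ℝ} (hg : ContinuousOn g s)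
    (hk : ContinuousOn k s) : ContinuousOn (fun t => det2 (g t) (k t)) s :=
  (hg.fst.mul hk.snd).sub (hg.snd.mul hk.fst)

end Derivatives

lemma ContDiffOn.hasDerivAt_deriv {E : Type*} [NormedAddCommGroup E] [NormedSpace ℝ E]
    {g : ℝ → E} {s : Set ℝ} {n : WithTop ℕ∞} {x : ℝ} (hg : ContDiffOn ℝ n g s) (hs : IsOpen s)
    (hn : n ≠ 0) (hx : x ∈ s) : HasDerivAt g (deriv g x) x :=
  ((hg.contDiffAt (hs.mem_nhds hx)).differentiableAt hn).hasDerivAt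

lemma ContinuousOn.hasDerivAt_integral {g : ℝ → ℝ} {s : Set ℝ} (hg : ContinuousOn g s)
    (hs : IsOpen s) (hsc : s.OrdConnected) {a x : ℝ} (ha : a ∈ s) (hx : x ∈ s) :
    HasDerivAt (fun x => ∫ k in a..x, g k) (g x) x :=
  integral_hasDerivAt_right ((hg.mono (hsc.uIcc_subset ha hx)).intervalIntegrable)
    (hg.stronglyMeasurableAtFilter hs x hx) (hg.continuousAt (hs.mem_nhds hx))

noncomputable def affineSphere (γ₁ γ₂ : ℝ → ℝ × ℝ) (u v : ℝ) : Fin 3 → ℝ :=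
  vec3 (γ₁ u + γ₂ v) (det2 (γ₁ u) (γ₂ v) + (∫ k in (0:ℝ)..u, det2 (γ₁ k) (deriv γ₁ k))
    - ∫ k in (0:ℝ)..v, det2 (γ₂ k) (deriv γ₂ k))

section AffineSphere

variable {I : Set ℝ} {γ₁ γ₂ : ℝ → ℝ × ℝ}

lemma hasDerivAt_integral_det2_deriv (hI : IsOpen I) (hIc : I.OrdConnected) (h0 : (0:ℝ) ∈ I)
    {γ : ℝ → ℝ × ℝ} (hγ : ContDiffOn ℝ 1 γ I) {x : ℝ} (hx : x ∈ I) :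
    HasDerivAt (fun x => ∫ k in (0:ℝ)..x, det2 (γ k) (deriv γ k)) (det2 (γ x) (deriv γ x)) x :=
  (hγ.continuousOn.det2 (hγ.deriv_of_isOpen (m := 0) hI (by norm_num)).continuousOn
    ).hasDerivAt_integral hI hIc h0 hx

lemma hasDerivAt_affineSphere_left (hI : IsOpen I) (hIc : I.OrdConnected) (h0 : (0:ℝ) ∈ I)
    (hγ₁ : ContDiffOn ℝ 1 γ₁ I) {u : ℝ} (hu : u ∈ I) (v : ℝ) :
    HasDerivAt (fun u => affineSphere γ₁ γ₂ u v)
      (vec3 (deriv γ₁ u) (det2 (deriv γ₁ u) (γ₂ v - γ₁ u))) u := by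
  have hγ := hγ₁.hasDerivAt_deriv hI one_ne_zero hu
  have hz := ((hγ.det2 (hasDerivAt_const u (γ₂ v))).add
    (hasDerivAt_integral_det2_deriv hI hIc h0 hγ₁ hu)).sub_const
    (∫ k in (0:ℝ)..v, det2 (γ₂ k) (deriv γ₂ k))
  refine (hγ.add_const (γ₂ v)).vec3 (hz.congr_deriv ?_)
  simp only [det2, Prod.fst_sub, Prod.snd_sub, Prod.fst_zero, Prod.snd_zero]; ring

lemma hasDerivAt_affineSphere_right (hI : IsOpen I) (hIc : I.OrdConnected) (h0 : (0:ℝ) ∈ I)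
    (hγ₂ : ContDiffOn ℝ 1 γ₂ I) (u : ℝ) {v : ℝ} (hv : v ∈ I) :
    HasDerivAt (fun v => affineSphere γ₁ γ₂ u v)
      (vec3 (deriv γ₂ v) (det2 (deriv γ₂ v) (γ₂ v - γ₁ u))) v := by
  have hγ := hγ₂.hasDerivAt_deriv hI one_ne_zero hv
  have hz := (((hasDerivAt_const v (γ₁ u)).det2 hγ).add_const
    (∫ k in (0:ℝ)..u, det2 (γ₁ k) (deriv γ₁ k))).sub
    (hasDerivAt_integral_det2_deriv hI hIc h0 hγ₂ hv)
  refine (hγ.const_add (γ₁ u)).vec3 (hz.congr_deriv ?_)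
  simp only [det2, Prod.fst_sub, Prod.snd_sub, Prod.fst_zero, Prod.snd_zero]; ring

lemma hasDerivAt_deriv_affineSphere_left (hI : IsOpen I) (hIc : I.OrdConnected)
    (h0 : (0:ℝ) ∈ I) (hγ₁ : ContDiffOn ℝ 2 γ₁ I) {u : ℝ} (hu : u ∈ I) (v : ℝ) :
    HasDerivAt (deriv fun u => affineSphere γ₁ γ₂ u v)
      (vec3 (deriv (deriv γ₁) u) (det2 (deriv (deriv γ₁) u) (γ₂ v - γ₁ u))) u := by
  have hγ := hγ₁.hasDerivAt_deriv hI (by norm_num) hu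
  have hγ' := (hγ₁.deriv_of_isOpen (m := 1) hI (by norm_num)).hasDerivAt_deriv hI
    (by norm_num) hu
  have hfirst : (deriv fun u => affineSphere γ₁ γ₂ u v) =ᶠ[𝓝 u]
      fun u => vec3 (deriv γ₁ u) (det2 (deriv γ₁ u) (γ₂ v - γ₁ u)) := by
    filter_upwards [hI.mem_nhds hu] with x hx
    exact (hasDerivAt_affineSphere_left hI hIc h0 (hγ₁.of_le one_le_two) hx v).deriv
  refine (hγ'.vec3 ((hγ'.det2 (hγ.const_sub (γ₂ v))).congr_deriv ?_)).congr_of_eventuallyEq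
    hfirst
  simp only [det2, Prod.fst_neg, Prod.snd_neg]; ring

lemma hasDerivAt_deriv_affineSphere_right (hI : IsOpen I) (hIc : I.OrdConnected)
    (h0 : (0:ℝ) ∈ I) (hγ₂ : ContDiffOn ℝ 2 γ₂ I) (u : ℝ) {v : ℝ} (hv : v ∈ I) :
    HasDerivAt (deriv fun v => affineSphere γ₁ γ₂ u v)
      (vec3 (deriv (deriv γ₂) v) (det2 (deriv (deriv γ₂) v) (γ₂ v - γ₁ u))) v := by
  have hγ := hγ₂.hasDerivAt_deriv hI (by norm_num) hv
  have hγ' := (hγ₂.deriv_of_isOpen (m := 1) hI (by norm_num)).hasDerivAt_deriv hI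
    (by norm_num) hv
  have hfirst : (deriv fun v => affineSphere γ₁ γ₂ u v) =ᶠ[𝓝 v]
      fun v => vec3 (deriv γ₂ v) (det2 (deriv γ₂ v) (γ₂ v - γ₁ u)) := by
    filter_upwards [hI.mem_nhds hv] with x hx
    exact (hasDerivAt_affineSphere_right hI hIc h0 (hγ₂.of_le one_le_two) u hx).deriv
  refine (hγ'.vec3 ((hγ'.det2 (hγ.sub_const (γ₁ u))).congr_deriv ?_)).congr_of_eventuallyEq
    hfirst
  simp only [det2]; ring

end AffineSphere

lemma hasDerivAt_deriv_affineSphere_right_left {I₁ I₂ : Set ℝ} {γ₁ γ₂ : ℝ → ℝ × ℝ}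
    (hI₁ : IsOpen I₁) (hI₂ : IsOpen I₂) (hI₂c : I₂.OrdConnected) (h0₂ : (0:ℝ) ∈ I₂)
    (hγ₁ : ContDiffOn ℝ 1 γ₁ I₁) (hγ₂ : ContDiffOn ℝ 1 γ₂ I₂) {u v : ℝ} (hu : u ∈ I₁)
    (hv : v ∈ I₂) :
    HasDerivAt (fun u => deriv (fun v => affineSphere γ₁ γ₂ u v) v)
      (vec3 0 (det2 (deriv γ₁ u) (deriv γ₂ v))) u := by
  have hfirst : (fun u => deriv (fun v => affineSphere γ₁ γ₂ u v) v) =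
      fun u => vec3 (deriv γ₂ v) (det2 (deriv γ₂ v) (γ₂ v - γ₁ u)) :=
    funext fun u => (hasDerivAt_affineSphere_right hI₂ hI₂c h0₂ hγ₂ u hv).deriv
  rw [hfirst]
  refine (hasDerivAt_const u _).vec3 (((hasDerivAt_const u _).det2
    ((hγ₁.hasDerivAt_deriv hI₁ one_ne_zero hu).const_sub (γ₂ v))).congr_deriv ?_)
  simp only [det2, Prod.fst_neg, Prod.snd_neg, Prod.fst_zero, Prod.snd_zero]; ring

/-- The representation formula: from two plane curves `γ₁`, `γ₂` and the height `z`, the map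
`f = (γ₁ + γ₂, z)` satisfies the Blaschke structure equations of an indefinite improper affine
sphere in asymptotic coordinates with constant affine normal `e₃ = (0,0,1)`, affine metric
`2ω du dv` and cubic form `A du³ + B dv³`. -/
theorem stmt6 (I₁ I₂ : Set ℝ) (hI₁ : IsOpen I₁) (hI₂ : IsOpen I₂)
    (hI₁c : I₁.OrdConnected) (hI₂c : I₂.OrdConnected) (h0₁ : (0:ℝ) ∈ I₁) (h0₂ : (0:ℝ) ∈ I₂)
    (γ₁ γ₂ : ℝ → ℝ × ℝ) (hγ₁ : ContDiffOn ℝ 2 γ₁ I₁) (hγ₂ : ContDiffOn ℝ 2 γ₂ I₂)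
    (z : ℝ → ℝ → ℝ)
    (hz : ∀ u v, z u v = det2 (γ₁ u) (γ₂ v)
      + (∫ k in (0:ℝ)..u, det2 (γ₁ k) (deriv γ₁ k))
      - ∫ k in (0:ℝ)..v, det2 (γ₂ k) (deriv γ₂ k))
    (f : ℝ → ℝ → (Fin 3 → ℝ))
    (hf : ∀ u v, f u v = ![(γ₁ u).1 + (γ₂ v).1, (γ₁ u).2 + (γ₂ v).2, z u v])
    (ω : ℝ → ℝ → ℝ) (A B : ℝ → ℝ)
    (hω : ∀ u v, ω u v = det2 (deriv γ₁ u) (deriv γ₂ v))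
    (hA : ∀ u, A u = det2 (deriv γ₁ u) (deriv (deriv γ₁) u))
    (hB : ∀ v, B v = det2 (deriv (deriv γ₂) v) (deriv γ₂ v))
    (e₃ : Fin 3 → ℝ) (he₃ : e₃ = ![0, 0, 1]) :
    -- (a) ∂_u∂_v f = ω e₃
    (∀ u ∈ I₁, ∀ v ∈ I₂,
      deriv (fun u' => deriv (fun v' => f u' v') v) u = ω u v • e₃) ∧
    -- (b) det[∂_u f, ∂_v f, e₃] = ω
    (∀ u ∈ I₁, ∀ v ∈ I₂,
      (Matrix.of fun i j =>
        (![deriv (fun u' => f u' v) u, deriv (fun v' => f u v') v, e₃] j) i).det = ω u v) ∧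
    -- (c) the Gauss equations wherever ω ≠ 0
    (∀ u ∈ I₁, ∀ v ∈ I₂, ω u v ≠ 0 →
      ω u v • deriv (fun u' => deriv (fun u'' => f u'' v) u') u
          = det2 (deriv (deriv γ₁) u) (deriv γ₂ v) • deriv (fun u' => f u' v) u
            + A u • deriv (fun v' => f u v') v ∧
      ω u v • deriv (fun v' => deriv (fun v'' => f u v'') v') v
          = B v • deriv (fun u' => f u' v) u
            + det2 (deriv γ₁ u) (deriv (deriv γ₂) v) • deriv (fun v' => f u v') v) := by
  obtain rfl : f = affineSphere γ₁ γ₂ := funext₂ fun u v => by rw [hf, hz]; rfl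
  subst he₃
  have hγ₁' := hγ₁.of_le one_le_two
  have hγ₂' := hγ₂.of_le one_le_two
  have hfu {u} (hu : u ∈ I₁) v :=
    (hasDerivAt_affineSphere_left (γ₂ := γ₂) hI₁ hI₁c h0₁ hγ₁' hu v).deriv
  have hfv u {v} (hv : v ∈ I₂) :=
    (hasDerivAt_affineSphere_right (γ₁ := γ₁) hI₂ hI₂c h0₂ hγ₂' u hv).deriv
  refine ⟨fun u hu v hv => ?_, fun u hu v hv => ?_, fun u hu v hv _ => ⟨?_, ?_⟩⟩
  · rw [(hasDerivAt_deriv_affineSphere_right_left hI₁ hI₂ hI₂c h0₂ hγ₁' hγ₂' hu hv).deriv, hω,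
      vec3_zero_left]
  · rw [hfu hu, hfv u hv, det_vec3_vec3_e3, hω]
  · rw [(hasDerivAt_deriv_affineSphere_left hI₁ hI₁c h0₁ hγ₁ hu v).deriv, hfu hu, hfv u hv, hω,
      hA, det2_smul_vec3]
  · rw [(hasDerivAt_deriv_affineSphere_right hI₂ hI₂c h0₂ hγ₂ u hv).deriv, hfu hu, hfv u hv, hω,
      hB, det2_smul_vec3]
end

section
/- Let γ : I → ℝ² be a C² curve on an open interval and define z(u,v) = det[γ(u), γ(v)] + ∫ᵥᵘ det[γ(k), γ′(k)]dk on I × I. Let D ⊆ I × I be an open set on which det[γ′(u), γ′(v)] ≠ 0 and on which the map Φ(u,v) = γ(u) + γ(v) is injective. Then Φ is a C¹-diffeomorphism of D onto the open set Φ(D) ⊆ ℝ², the function ψ = z ∘ Φ⁻¹ is C² on Φ(D), and ψ satisfies the hyperbolic Monge–Ampère equation (∂_x²ψ)(∂_y²ψ) − (∂_x∂_yψ)² = −1 at every point of Φ(D). -/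
noncomputable def pdx (f : ℝ × ℝ → ℝ) (p : ℝ × ℝ) : ℝ :=
  deriv (fun x => f (x, p.2)) p.1

noncomputable def pdy (f : ℝ × ℝ → ℝ) (p : ℝ × ℝ) : ℝ :=
  deriv (fun y => f (p.1, y)) p.2

open Filter Topology Set Function ContinuousLinearMap

section LinearAlgebra

variable {E : Type*} [NormedAddCommGroup E] [NormedSpace ℝ E]

noncomputable def cols (a b : E) : ℝ × ℝ →L[ℝ] E :=
  (toSpanSingleton ℝ a).coprod (toSpanSingleton ℝ b)

@[simp] theorem cols_apply (a b : E) (x : ℝ × ℝ) : cols a b x = x.1 • a + x.2 • b := by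
  simp [cols]

theorem cols_real_eq (s t : ℝ) : cols s t = s • fst ℝ ℝ ℝ + t • snd ℝ ℝ ℝ := by
  ext <;> simp [mul_comm]

noncomputable def perp : ℝ × ℝ →L[ℝ] ℝ × ℝ := (snd ℝ ℝ ℝ).prod (-fst ℝ ℝ ℝ)

@[simp] theorem perp_apply (x : ℝ × ℝ) : perp x = (x.2, -x.1) := rfl

theorem cols_det2_eq_comp (a b c : ℝ × ℝ) :
    cols (det2 a c) (det2 b c) = (cols (perp c).1 (perp c).2).comp (cols a b) := by
  refine ContinuousLinearMap.ext fun x => ?_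
  simp only [det2, cols_apply, smul_eq_mul, perp_apply, ContinuousLinearMap.comp_apply,
    Prod.fst_add, Prod.smul_fst, Prod.snd_add, Prod.smul_snd, mul_neg]
  ring

noncomputable def colsEquiv (a b : ℝ × ℝ) (h : det2 a b ≠ 0) : (ℝ × ℝ) ≃L[ℝ] (ℝ × ℝ) :=
  ContinuousLinearEquiv.equivOfInverse (cols a b)
    (cols (b.2 / det2 a b, -a.2 / det2 a b) (-b.1 / det2 a b, a.1 / det2 a b))
    (fun x => by
      ext <;> simp only [cols_apply, Prod.fst_add, Prod.snd_add, Prod.smul_fst, Prod.smul_snd,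
        Prod.smul_mk, smul_eq_mul] <;> field_simp <;> simp only [det2] <;> ring)
    (fun x => by
      ext <;> simp only [cols_apply, Prod.fst_add, Prod.snd_add, Prod.smul_fst, Prod.smul_snd,
        Prod.smul_mk, smul_eq_mul] <;> field_simp <;> simp only [det2] <;> ring)

@[simp] theorem colsEquiv_symm_apply (a b : ℝ × ℝ) (h : det2 a b ≠ 0) (x : ℝ × ℝ) :
    (colsEquiv a b h).symm x =
      x.1 • (b.2 / det2 a b, -a.2 / det2 a b) + x.2 • (-b.1 / det2 a b, a.1 / det2 a b) := rfl

/-- For this (symmetric) `H`, the left-hand side is `det H = det dG / det dΦ` with `dΦ = cols a b`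
and `dG = cols (-perp a) (perp b)`. -/
theorem hessian_eq_neg_one_of_eq_comp (a b : ℝ × ℝ) (h : det2 a b ≠ 0) {H : ℝ × ℝ →L[ℝ] ℝ × ℝ}
    (hH : H = (cols (-perp a) (perp b)).comp ((colsEquiv a b h).symm : ℝ × ℝ →L[ℝ] ℝ × ℝ)) :
    (H (1, 0)).1 * (H (0, 1)).2 - (H (1, 0)).2 ^ 2 = -1 := by
  subst hH
  simp only [perp_apply, Prod.neg_mk, neg_neg, ContinuousLinearMap.comp_apply,
    ContinuousLinearEquiv.coe_coe, colsEquiv_symm_apply, one_smul, zero_smul, add_zero, cols_apply,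
    Prod.smul_mk, smul_eq_mul, mul_neg, Prod.mk_add_mk, zero_add]
  field_simp
  simp only [det2]
  ring

end LinearAlgebra

section PartialDerivatives

noncomputable def hessianDet (ψ : ℝ × ℝ → ℝ) (q : ℝ × ℝ) : ℝ :=
  pdx (pdx ψ) q * pdy (pdy ψ) q - (pdx (pdy ψ) q) ^ 2

variable {f g : ℝ × ℝ → ℝ} {q : ℝ × ℝ}

theorem pdx_of_hasFDerivAt {L : ℝ × ℝ →L[ℝ] ℝ} (h : HasFDerivAt f L q) : pdx f q = L (1, 0) :=
  (h.comp_hasDerivAt_of_eq q.1 ((hasDerivAt_id _).prodMk (hasDerivAt_const _ _)) rfl).deriv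

theorem pdy_of_hasFDerivAt {L : ℝ × ℝ →L[ℝ] ℝ} (h : HasFDerivAt f L q) : pdy f q = L (0, 1) :=
  (h.comp_hasDerivAt_of_eq q.2 ((hasDerivAt_const _ _).prodMk (hasDerivAt_id _)) rfl).deriv

theorem pdx_congr_of_eventuallyEq (h : f =ᶠ[𝓝 q] g) : pdx f q = pdx g q :=
  (h.comp_tendsto ((Continuous.prodMk_left q.2).tendsto' q.1 q rfl)).deriv_eq

theorem pdy_congr_of_eventuallyEq (h : f =ᶠ[𝓝 q] g) : pdy f q = pdy g q :=
  (h.comp_tendsto ((Continuous.prodMk_right q.1).tendsto' q.2 q rfl)).deriv_eq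

variable {ψ : ℝ × ℝ → ℝ} {G : ℝ × ℝ → ℝ × ℝ}

theorem hessianDet_eq_of_hasFDerivAt_gradient {H : ℝ × ℝ →L[ℝ] ℝ × ℝ}
    (hψ : ∀ᶠ y in 𝓝 q, HasFDerivAt ψ (cols (G y).1 (G y).2) y) (hG : HasFDerivAt G H q) :
    hessianDet ψ q = (H (1, 0)).1 * (H (0, 1)).2 - (H (1, 0)).2 ^ 2 := by
  have hx : pdx ψ =ᶠ[𝓝 q] fun y => (G y).1 :=
    hψ.mono fun y hy => by simp [pdx_of_hasFDerivAt hy]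
  have hy : pdy ψ =ᶠ[𝓝 q] fun y => (G y).2 :=
    hψ.mono fun y hy => by simp [pdy_of_hasFDerivAt hy]
  rw [hessianDet, pdx_congr_of_eventuallyEq hx, pdy_congr_of_eventuallyEq hy,
    pdx_congr_of_eventuallyEq hy, pdx_of_hasFDerivAt hG.fst, pdy_of_hasFDerivAt hG.snd,
    pdx_of_hasFDerivAt hG.snd]
  rfl

theorem contDiffOn_two_of_hasFDerivAt_gradient {U : Set (ℝ × ℝ)} (hU : IsOpen U)
    (hψ : ∀ y ∈ U, HasFDerivAt ψ (cols (G y).1 (G y).2) y) (hG : ContDiffOn ℝ 1 G U) :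
    ContDiffOn ℝ 2 ψ U := by
  rw [show (2 : WithTop ℕ∞) = 1 + 1 from rfl, contDiffOn_succ_iff_fderiv_of_isOpen hU]
  refine ⟨fun y hy => (hψ y hy).differentiableAt.differentiableWithinAt, by simp, ?_⟩
  refine ContDiffOn.congr ?_ fun y hy => (hψ y hy).fderiv
  simp only [cols_real_eq]
  exact (hG.fst.smul contDiffOn_const).add (hG.snd.smul contDiffOn_const)

end PartialDerivatives

section ChainRule

variable {𝕂 : Type*} [NontriviallyNormedField 𝕂] {E F G : Type*} [NormedAddCommGroup E]
  [NormedSpace 𝕂 E] [NormedAddCommGroup F] [NormedSpace 𝕂 F] [NormedAddCommGroup G]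
  [NormedSpace 𝕂 G] {f : E → F} {g : F → G} {x : E} {y : F}

theorem HasFDerivAt.comp_of_eq {g' : F →L[𝕂] G} {f' : E →L[𝕂] F} (hg : HasFDerivAt g g' y)
    (hf : HasFDerivAt f f' x) (hy : f x = y) : HasFDerivAt (g ∘ f) (g'.comp f') x := by
  subst hy
  exact hg.comp x hf

theorem HasFDerivAt.comp_symm_of_eq {e : F ≃L[𝕂] E} {L : E →L[𝕂] G}
    (hg : HasFDerivAt g (L.comp (e : F →L[𝕂] E)) y) (hf : HasFDerivAt f (e.symm : E →L[𝕂] F) x)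
    (hy : f x = y) : HasFDerivAt (g ∘ f) L x := by
  simpa [ContinuousLinearMap.comp_assoc] using hg.comp_of_eq hf hy

end ChainRule

section InverseFunction

theorem Set.InjOn.eventually_invFunOn_apply {α β : Type*} [TopologicalSpace α] [Nonempty α]
    {f : α → β} {D : Set α} (hinj : InjOn f D) (hD : IsOpen D) {a : α} (ha : a ∈ D) :
    ∀ᶠ x in 𝓝 a, invFunOn f D (f x) = x :=
  eventually_of_mem (hD.mem_nhds ha) fun _ hx => hinj.leftInvOn_invFunOn hx

variable {𝕂 : Type*} [RCLike 𝕂] {E F : Type*} [NormedAddCommGroup E] [NormedSpace 𝕂 E]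
  [CompleteSpace E] [NormedAddCommGroup F] [NormedSpace 𝕂 F]
  {f : E → F} {D : Set E} {n : WithTop ℕ∞}

theorem isOpen_image_of_contDiffOn (hD : IsOpen D) (hf : ContDiffOn 𝕂 n f D) (hn : n ≠ 0)
    (hf' : ∀ x ∈ D, ∃ f' : E ≃L[𝕂] F, HasFDerivAt f (f' : E →L[𝕂] F) x) : IsOpen (f '' D) := by
  rw [isOpen_iff_mem_nhds]
  rintro _ ⟨x, hx, rfl⟩
  obtain ⟨f', hf'x⟩ := hf' x hx
  rw [← ((hf.contDiffAt (hD.mem_nhds hx)).hasStrictFDerivAt' hf'x hn).map_nhds_eq_of_equiv]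
  exact image_mem_map (hD.mem_nhds hx)

variable [Nonempty E]

theorem hasFDerivAt_invFunOn (hD : IsOpen D) (hinj : InjOn f D) (hf : ContDiffOn 𝕂 n f D)
    (hn : n ≠ 0) {a : E} (ha : a ∈ D) {f' : E ≃L[𝕂] F} (hf' : HasFDerivAt f (f' : E →L[𝕂] F) a) :
    HasFDerivAt (invFunOn f D) (f'.symm : F →L[𝕂] E) (f a) :=
  (((hf.contDiffAt (hD.mem_nhds ha)).hasStrictFDerivAt' hf' hn).to_local_left_inverse
    (hinj.eventually_invFunOn_apply hD ha)).hasFDerivAt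

theorem contDiffOn_invFunOn (hD : IsOpen D) (hinj : InjOn f D) (hf : ContDiffOn 𝕂 n f D)
    (hn : n ≠ 0) (hf' : ∀ x ∈ D, ∃ f' : E ≃L[𝕂] F, HasFDerivAt f (f' : E →L[𝕂] F) x) :
    ContDiffOn 𝕂 n (invFunOn f D) (f '' D) := by
  rintro _ ⟨x, hx, rfl⟩
  obtain ⟨f', hf'x⟩ := hf' x hx
  have hfx := hf.contDiffAt (hD.mem_nhds hx)
  refine ((hfx.to_localInverse hf'x hn).congr_of_eventuallyEq ?_).contDiffWithinAt
  exact (hfx.hasStrictFDerivAt' hf'x hn).localInverse_unique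
    (hinj.eventually_invFunOn_apply hD hx)

end InverseFunction

section Curves

variable {E : Type*} [NormedAddCommGroup E] [NormedSpace ℝ E]

theorem ContDiffOn.hasDerivAt_deriv_s7 {γ : ℝ → E} {I : Set ℝ} {n : WithTop ℕ∞}
    (hγ : ContDiffOn ℝ n γ I) (hn : n ≠ 0) (hI : IsOpen I) {t : ℝ} (ht : t ∈ I) :
    HasDerivAt γ (deriv γ t) t :=
  (hγ.differentiableOn hn).hasDerivAt (hI.mem_nhds ht)

theorem contDiffOn_comp_fst_add_comp_snd {g h : ℝ → E} {s t : Set ℝ} {n : WithTop ℕ∞}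
    (hg : ContDiffOn ℝ n g s) (hh : ContDiffOn ℝ n h t) :
    ContDiffOn ℝ n (fun q : ℝ × ℝ => g q.1 + h q.2) (s ×ˢ t) :=
  (hg.comp contDiffOn_fst fun _ hq => hq.1).add (hh.comp contDiffOn_snd fun _ hq => hq.2)

theorem hasFDerivAt_comp_fst_add_comp_snd {g h : ℝ → E} {a b : E} {p : ℝ × ℝ}
    (hg : HasDerivAt g a p.1) (hh : HasDerivAt h b p.2) :
    HasFDerivAt (fun q : ℝ × ℝ => g q.1 + h q.2) (cols a b) p := by
  refine ((hg.hasFDerivAt.comp p hasFDerivAt_fst).add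
    (hh.hasFDerivAt.comp p hasFDerivAt_snd)).congr_fderiv ?_
  ext <;> simp

theorem continuousOn_det2 {α β : ℝ → ℝ × ℝ} {s : Set ℝ} (hα : ContinuousOn α s)
    (hβ : ContinuousOn β s) : ContinuousOn (fun t => det2 (α t) (β t)) s := by
  unfold det2; fun_prop

theorem hasFDerivAt_det2_comp_fst_comp_snd {α β : ℝ → ℝ × ℝ} {a b : ℝ × ℝ} {p : ℝ × ℝ}
    (hα : HasDerivAt α a p.1) (hβ : HasDerivAt β b p.2) :
    HasFDerivAt (fun q : ℝ × ℝ => det2 (α q.1) (β q.2)) (cols (det2 a (β p.2)) (det2 (α p.1) b))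
      p := by
  have hα' := hα.hasFDerivAt.comp p hasFDerivAt_fst
  have hβ' := hβ.hasFDerivAt.comp p hasFDerivAt_snd
  refine ((hα'.fst.mul hβ'.snd).sub (hα'.snd.mul hβ'.fst)).congr_fderiv ?_
  refine ContinuousLinearMap.ext fun x => ?_
  simp only [Function.comp_apply, sub_apply, add_apply, smul_apply, ContinuousLinearMap.comp_apply,
    coe_snd', toSpanSingleton_apply, map_smul, smul_eq_mul, coe_fst', det2, cols_apply]
  ring

theorem hasFDerivAt_intervalIntegral_snd_fst [CompleteSpace E] {f : ℝ → E} {I : Set ℝ}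
    (hI : IsOpen I) (hIc : I.OrdConnected) (hf : ContinuousOn f I) {p : ℝ × ℝ}
    (hp : p ∈ I ×ˢ I) :
    HasFDerivAt (fun q : ℝ × ℝ => ∫ k in q.2..q.1, f k) (cols (f p.1) (-f p.2)) p := by
  have hmeas : ∀ t ∈ I, StronglyMeasurableAtFilter f (𝓝 t) :=
    fun t ht => hf.stronglyMeasurableAtFilter hI t ht
  have hcont : ∀ t ∈ I, ContinuousAt f t := fun t ht => hf.continuousAt (hI.mem_nhds ht)
  have h := intervalIntegral.integral_hasFDerivAt
    ((hf.mono (hIc.uIcc_subset hp.2 hp.1)).intervalIntegrable)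
    (hmeas _ hp.2) (hmeas _ hp.1) (hcont _ hp.2) (hcont _ hp.1)
  have hswap : HasFDerivAt (fun q : ℝ × ℝ => (q.2, q.1)) _ p :=
    (hasFDerivAt_snd (𝕜 := ℝ)).prodMk (hasFDerivAt_fst (𝕜 := ℝ))
  refine (h.comp p hswap).congr_fderiv ?_
  ext <;> simp

/-- `chordPerp γ (u, v)` is the gradient of `ψ = z ∘ Φ⁻¹` at `Φ (u, v)`. -/
noncomputable def chordPerp (γ : ℝ → ℝ × ℝ) (q : ℝ × ℝ) : ℝ × ℝ := perp (γ q.2 - γ q.1)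

variable {γ : ℝ → ℝ × ℝ} {I : Set ℝ} {p : ℝ × ℝ}

theorem chordPerp_eq (γ : ℝ → ℝ × ℝ) : chordPerp γ = fun q => -perp (γ q.1) + perp (γ q.2) := by
  funext q
  rw [chordPerp, map_sub, sub_eq_neg_add]

theorem hasFDerivAt_chordPerp (hI : IsOpen I) (hγ : ContDiffOn ℝ 1 γ I) (hp : p ∈ I ×ˢ I) :
    HasFDerivAt (chordPerp γ) (cols (-perp (deriv γ p.1)) (perp (deriv γ p.2))) p := by
  rw [chordPerp_eq]
  exact hasFDerivAt_comp_fst_add_comp_snd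
    (perp.hasFDerivAt.comp_hasDerivAt _ (hγ.hasDerivAt_deriv_s7 one_ne_zero hI hp.1)).neg
    (perp.hasFDerivAt.comp_hasDerivAt _ (hγ.hasDerivAt_deriv_s7 one_ne_zero hI hp.2))

theorem contDiffOn_chordPerp {n : WithTop ℕ∞} (hγ : ContDiffOn ℝ n γ I) :
    ContDiffOn ℝ n (chordPerp γ) (I ×ˢ I) := by
  rw [chordPerp_eq]
  exact contDiffOn_comp_fst_add_comp_snd (perp.contDiff.comp_contDiffOn hγ).neg
    (perp.contDiff.comp_contDiffOn hγ)

theorem hasFDerivAt_det2_add_integral (hI : IsOpen I) (hIc : I.OrdConnected)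
    (hγ : ContDiffOn ℝ 1 γ I) (hp : p ∈ I ×ˢ I) :
    HasFDerivAt (fun q : ℝ × ℝ => det2 (γ q.1) (γ q.2) + ∫ k in q.2..q.1, det2 (γ k) (deriv γ k))
      ((cols (chordPerp γ p).1 (chordPerp γ p).2).comp (cols (deriv γ p.1) (deriv γ p.2))) p := by
  have hf := continuousOn_det2 hγ.continuousOn (hγ.continuousOn_deriv_of_isOpen hI le_rfl)
  rw [chordPerp, ← cols_det2_eq_comp]
  refine ((hasFDerivAt_det2_comp_fst_comp_snd (hγ.hasDerivAt_deriv_s7 one_ne_zero hI hp.1)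
    (hγ.hasDerivAt_deriv_s7 one_ne_zero hI hp.2)).add
    (hasFDerivAt_intervalIntegral_snd_fst hI hIc hf hp)).congr_fderiv ?_
  refine ContinuousLinearMap.ext fun x => ?_
  simp only [det2, neg_sub, add_apply, cols_apply, smul_eq_mul, Prod.snd_sub, Prod.fst_sub]
  ring

end Curves

/-- On a region where `Φ(u,v) = γ(u) + γ(v)` is injective with nonvanishing Jacobian
determinant `det[γ′(u), γ′(v)]`, the map `Φ` is a `C¹`-diffeomorphism onto the open set
`Φ(D)`, and `ψ = z ∘ Φ⁻¹` is a `C²` solution of the hyperbolic Monge–Ampère equation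
`ψ_xx ψ_yy − ψ_xy² = −1` on `Φ(D)`. -/
theorem stmt7 (I : Set ℝ) (hI : IsOpen I) (hIc : I.OrdConnected)
    (γ : ℝ → ℝ × ℝ) (hγ : ContDiffOn ℝ 2 γ I)
    (z : ℝ × ℝ → ℝ)
    (hz : ∀ p : ℝ × ℝ, z p = det2 (γ p.1) (γ p.2)
      + ∫ k in p.2..p.1, det2 (γ k) (deriv γ k))
    (Φ : ℝ × ℝ → ℝ × ℝ) (hΦ : ∀ p : ℝ × ℝ, Φ p = γ p.1 + γ p.2)
    (D : Set (ℝ × ℝ)) (hD : IsOpen D) (hDI : D ⊆ I ×ˢ I)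
    (hjac : ∀ p ∈ D, det2 (deriv γ p.1) (deriv γ p.2) ≠ 0)
    (hinj : Set.InjOn Φ D) :
    IsOpen (Φ '' D) ∧
    ∃ Φinv : ℝ × ℝ → ℝ × ℝ,
      Set.LeftInvOn Φinv Φ D ∧ Set.RightInvOn Φinv Φ (Φ '' D) ∧
      ContDiffOn ℝ 1 Φinv (Φ '' D) ∧
      ContDiffOn ℝ 2 (z ∘ Φinv) (Φ '' D) ∧
      ∀ p ∈ Φ '' D,
        pdx (pdx (z ∘ Φinv)) p * pdy (pdy (z ∘ Φinv)) p
          - (pdx (pdy (z ∘ Φinv)) p) ^ 2 = -1 := by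
  have hγ1 : ContDiffOn ℝ 1 γ I := hγ.of_le one_le_two
  have hΦC1 : ContDiffOn ℝ 1 Φ D :=
    funext hΦ ▸ (contDiffOn_comp_fst_add_comp_snd hγ1 hγ1).mono hDI
  have hdΦ : ∀ p (hp : p ∈ D),
      HasFDerivAt Φ (colsEquiv _ _ (hjac p hp) : ℝ × ℝ →L[ℝ] ℝ × ℝ) p := fun p hp =>
    funext hΦ ▸ hasFDerivAt_comp_fst_add_comp_snd (hγ1.hasDerivAt_deriv_s7 one_ne_zero hI (hDI hp).1)
      (hγ1.hasDerivAt_deriv_s7 one_ne_zero hI (hDI hp).2)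
  have hopen := isOpen_image_of_contDiffOn hD hΦC1 one_ne_zero fun p hp => ⟨_, hdΦ p hp⟩
  set Φinv := invFunOn Φ D
  have hleft : LeftInvOn Φinv Φ D := hinj.leftInvOn_invFunOn
  have hdΦinv : ∀ p (hp : p ∈ D), HasFDerivAt Φinv
      ((colsEquiv _ _ (hjac p hp)).symm : ℝ × ℝ →L[ℝ] ℝ × ℝ) (Φ p) := fun p hp =>
    hasFDerivAt_invFunOn hD hinj hΦC1 one_ne_zero hp (hdΦ p hp)
  have hΦinvC1 : ContDiffOn ℝ 1 Φinv (Φ '' D) :=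
    contDiffOn_invFunOn hD hinj hΦC1 one_ne_zero fun p hp => ⟨_, hdΦ p hp⟩
  have hgrad : ∀ y ∈ Φ '' D, HasFDerivAt (z ∘ Φinv)
      (cols (chordPerp γ (Φinv y)).1 (chordPerp γ (Φinv y)).2) y := by
    rintro _ ⟨p, hp, rfl⟩
    rw [hleft hp]
    exact (funext hz ▸ hasFDerivAt_det2_add_integral hI hIc hγ1 (hDI hp)).comp_symm_of_eq
      (hdΦinv p hp) (hleft hp)
  have hmaps : MapsTo Φinv (Φ '' D) (I ×ˢ I) := (surjOn_image Φ D).mapsTo_invFunOn.mono_right hDI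
  refine ⟨hopen, Φinv, hleft, (surjOn_image Φ D).rightInvOn_invFunOn, hΦinvC1,
    contDiffOn_two_of_hasFDerivAt_gradient hopen hgrad
      ((contDiffOn_chordPerp hγ1).comp hΦinvC1 hmaps), ?_⟩
  rintro _ ⟨p, hp, rfl⟩
  calc hessianDet (z ∘ Φinv) (Φ p)
      = _ := hessianDet_eq_of_hasFDerivAt_gradient (G := chordPerp γ ∘ Φinv)
        (eventually_of_mem (hopen.mem_nhds ⟨p, hp, rfl⟩) hgrad)
        ((hasFDerivAt_chordPerp hI hγ1 (hDI hp)).comp_of_eq (hdΦinv p hp) (hleft hp))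
    _ = -1 := hessian_eq_neg_one_of_eq_comp _ _ (hjac p hp) rfl
end

section
/- Let ε, δ > 0, λ ∈ ℝ, λ ≠ 0, and let α, β, ρ, σ : ℤ → ℝ be sequences. Define a_n = ε Σ_k^n α_k, b_n = ε Σ_k^n β_k, c_n = ε Σ_k^n a_k β_k, r_m = δ Σ_k^m ρ_k, s_m = δ Σ_k^m σ_k, t_m = δ Σ_k^m r_k σ_k (bidirectional sums). Define F⁺_n = [[1,0,0],[b_n λ,1,0],[c_n λ², a_n λ,1]] and G⁻_m = [[1, s_m λ⁻¹, 0],[0,1,0],[r_m λ⁻¹, t_m λ⁻², 1]]. Then F⁺_0 = G⁻_0 = I, and for all n, m ∈ ℤ: F⁺_{n+1} = F⁺_n · ξ⁺_n and G⁻_{m+1} = G⁻_m · ξ⁻_m, where ξ⁺_n = [[1,0,0],[β_{n+1}ελ,1,0],[α_{n+1}β_{n+1}ε²λ², α_{n+1}ελ, 1]] and ξ⁻_m = [[1, σ_{m+1}δλ⁻¹, 0],[0,1,0],[ρ_{m+1}δλ⁻¹, σ_{m+1}ρ_{m+1}δ²λ⁻², 1]]. -/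
/-!
Both families lie in groups of unipotent `3 × 3` matrices with an explicit product rule: the
lower unitriangular matrices, and the matrices `[[1, s, 0], [0, 1, 0], [r, t, 1]]`. Multiplying
`F⁺_n` by `ξ⁺_n` (resp. `G⁻_m` by `ξ⁻_m`) therefore adds to each entry exactly the increment
that the recursion `Σ_k^{n+1} x_k = Σ_k^n x_k + x_{n+1}` of the bidirectional sum predicts.
-/

/-- Bidirectional sum: `Σ_k^n x_k = Σ_{k=1}^n x_k` for `n ≥ 1`, `0` for `n = 0`, and
`−Σ_{k=n+1}^0 x_k` for `n ≤ −1`. -/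
noncomputable def bsum (x : ℤ → ℝ) (n : ℤ) : ℝ :=
  if 1 ≤ n then ∑ k ∈ Finset.Icc (1:ℤ) n, x k
  else if n = 0 then 0
  else -∑ k ∈ Finset.Icc (n+1) (0:ℤ), x k

@[simp]
lemma bsum_zero (x : ℤ → ℝ) : bsum x 0 = 0 := by
  simp [bsum]

lemma bsum_succ (x : ℤ → ℝ) (n : ℤ) : bsum x (n + 1) = bsum x n + x (n + 1) := by
  rcases lt_trichotomy n 0 with hn | rfl | hn
  · obtain rfl | hn := eq_or_lt_of_le (Int.le_sub_one_of_lt hn)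
    · simp [bsum]
    · have hIcc := Finset.insert_Icc_add_one_left_eq_Icc (show n + 1 ≤ 0 by omega)
      rw [bsum, bsum, if_neg (by omega), if_neg (by omega), if_neg (by omega), if_neg (by omega),
        ← hIcc, Finset.sum_insert (by simp)]
      ring
  · simp [bsum]
  · have hIcc := Finset.insert_Icc_right_eq_Icc_add_one (show (1 : ℤ) ≤ n + 1 by omega)
    rw [bsum, bsum, if_pos (by omega), if_pos (by omega), ← hIcc, Finset.sum_insert (by simp)]
    ring

lemma mul_bsum_succ {ε : ℝ} {x f : ℤ → ℝ} (hf : ∀ n, f n = ε * bsum x n) (n : ℤ) :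
    f (n + 1) = f n + ε * x (n + 1) := by
  rw [hf, hf, bsum_succ, mul_add]

namespace Matrix

variable {R : Type*} [CommRing R]

lemma lowerUnitriangular_three_mul (a b c a' b' c' : R) :
    !![1, 0, 0; b, 1, 0; c, a, 1] * !![1, 0, 0; b', 1, 0; c', a', 1] =
      !![1, 0, 0; b + b', 1, 0; c + a * b' + c', a + a', 1] := by
  rw [mul_fin_three]
  simp only [mul_one, one_mul, mul_zero, zero_mul, add_zero, zero_add]

lemma unitMiddleRow_three_mul (r s t r' s' t' : R) :
    !![1, s, 0; 0, 1, 0; r, t, 1] * !![1, s', 0; 0, 1, 0; r', t', 1] =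
      !![1, s + s', 0; 0, 1, 0; r + r', t + r * s' + t', 1] := by
  rw [mul_fin_three]
  simp only [mul_one, one_mul, mul_zero, zero_mul, add_zero, zero_add]
  ring_nf

end Matrix

theorem stmt9_general (ε δ : ℝ) (lam : ℝ)
    (α β ρ σ : ℤ → ℝ)
    (a b c r s t : ℤ → ℝ)
    (ha : ∀ n, a n = ε * bsum α n)
    (hb : ∀ n, b n = ε * bsum β n)
    (hc : ∀ n, c n = ε * bsum (fun k => a k * β k) n)
    (hr : ∀ m, r m = δ * bsum ρ m)
    (hs : ∀ m, s m = δ * bsum σ m)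
    (ht : ∀ m, t m = δ * bsum (fun k => r k * σ k) m)
    (Fp Gm : ℤ → Matrix (Fin 3) (Fin 3) ℝ)
    (hFp : ∀ n, Fp n = !![1, 0, 0;
                          b n * lam, 1, 0;
                          c n * lam ^ 2, a n * lam, 1])
    (hGm : ∀ m, Gm m = !![1, s m * lam⁻¹, 0;
                          0, 1, 0;
                          r m * lam⁻¹, t m * lam⁻¹ ^ 2, 1]) :
    Fp 0 = 1 ∧ Gm 0 = 1 ∧
    (∀ n : ℤ, Fp (n+1) = Fp n *
      !![1, 0, 0;
         β (n+1) * ε * lam, 1, 0;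
         α (n+1) * β (n+1) * ε ^ 2 * lam ^ 2, α (n+1) * ε * lam, 1]) ∧
    (∀ m : ℤ, Gm (m+1) = Gm m *
      !![1, σ (m+1) * δ * lam⁻¹, 0;
         0, 1, 0;
         ρ (m+1) * δ * lam⁻¹, σ (m+1) * ρ (m+1) * δ ^ 2 * lam⁻¹ ^ 2, 1]) := by
  refine ⟨?_, ?_, fun n => ?_, fun m => ?_⟩
  · simp [hFp, ha, hb, hc, Matrix.one_fin_three]
  · simp [hGm, hr, hs, ht, Matrix.one_fin_three]
  · rw [hFp, hFp, Matrix.lowerUnitriangular_three_mul, mul_bsum_succ hc, mul_bsum_succ ha,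
      mul_bsum_succ hb]
    ring_nf
  · rw [hGm, hGm, Matrix.unitMiddleRow_three_mul, mul_bsum_succ ht, mul_bsum_succ hr,
      mul_bsum_succ hs]
    ring_nf

/-- The explicit solutions `F⁺_n`, `G⁻_m` of the discrete ODEs `F⁺_{n+1} = F⁺_n ξ⁺_n`,
`G⁻_{m+1} = G⁻_m ξ⁻_m` given by the discrete normalized potentials (case `H = 0`). -/
theorem stmt9 (ε δ : ℝ) (hε : 0 < ε) (hδ : 0 < δ) (lam : ℝ) (hlam : lam ≠ 0)
    (α β ρ σ : ℤ → ℝ)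
    (a b c r s t : ℤ → ℝ)
    (ha : ∀ n, a n = ε * bsum α n)
    (hb : ∀ n, b n = ε * bsum β n)
    (hc : ∀ n, c n = ε * bsum (fun k => a k * β k) n)
    (hr : ∀ m, r m = δ * bsum ρ m)
    (hs : ∀ m, s m = δ * bsum σ m)
    (ht : ∀ m, t m = δ * bsum (fun k => r k * σ k) m)
    (Fp Gm : ℤ → Matrix (Fin 3) (Fin 3) ℝ)
    (hFp : ∀ n, Fp n = !![1, 0, 0;
                          b n * lam, 1, 0;
                          c n * lam ^ 2, a n * lam, 1])
    (hGm : ∀ m, Gm m = !![1, s m * lam⁻¹, 0;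
                          0, 1, 0;
                          r m * lam⁻¹, t m * lam⁻¹ ^ 2, 1]) :
    Fp 0 = 1 ∧ Gm 0 = 1 ∧
    (∀ n : ℤ, Fp (n+1) = Fp n *
      !![1, 0, 0;
         β (n+1) * ε * lam, 1, 0;
         α (n+1) * β (n+1) * ε ^ 2 * lam ^ 2, α (n+1) * ε * lam, 1]) ∧
    (∀ m : ℤ, Gm (m+1) = Gm m *
      !![1, σ (m+1) * δ * lam⁻¹, 0;
         0, 1, 0;
         ρ (m+1) * δ * lam⁻¹, σ (m+1) * ρ (m+1) * δ ^ 2 * lam⁻¹ ^ 2, 1]) :=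
  stmt9_general ε δ lam α β ρ σ a b c r s t ha hb hc hr hs ht Fp Gm hFp hGm
end

section
/- Let ε, δ > 0, λ ∈ ℝ, λ ≠ 0, α, β, ρ, σ : ℤ → ℝ, and define a_n = ε Σ_k^n α_k, b_n = ε Σ_k^n β_k, c_n = ε Σ_k^n a_k β_k, r_m = δ Σ_k^m ρ_k, s_m = δ Σ_k^m σ_k, t_m = δ Σ_k^m r_k σ_k (bidirectional sums), F⁺_n = [[1,0,0],[b_nλ,1,0],[c_nλ², a_nλ,1]], G⁻_m = [[1, s_mλ⁻¹, 0],[0,1,0],[r_mλ⁻¹, t_mλ⁻², 1]]. Fix (n, m) ∈ ℤ² with 1 − b_n s_m ≠ 0 and define V⁺_{n,m} = [[1,0,0],[b_n(1−b_ns_m)⁻¹λ, 1, 0],[c_n(1−b_ns_m)⁻¹λ², (a_n − s_m(a_nb_n − c_n))λ, 1]] and V⁻_{n,m} = [[(1−b_ns_m)⁻¹, s_mλ⁻¹, 0],[0, 1−b_ns_m, 0],[(r_m + b_nt_m(1−b_ns_m)⁻¹)λ⁻¹, t_mλ⁻², 1]]. Then F⁺_n · V⁻_{n,m} = G⁻_m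 · V⁺_{n,m} (equivalently, (G⁻_m)⁻¹F⁺_n = V⁺_{n,m}(V⁻_{n,m})⁻¹), and det V⁺_{n,m} = det V⁻_{n,m} = 1. -/
/-! The factorization is an identity of 3 × 3 matrices whose entries are rational in
`a_n, b_n, c_n, r_m, s_m, t_m, λ`, so it is checked entrywise; the form with inverses follows
because `G⁻_m` and `V⁻_{n,m}` are unimodular. -/

namespace Matrix

variable {n : Type*} [Fintype n] [DecidableEq n] {R : Type*} [CommRing R]

theorem inv_mul_eq_mul_inv_of_mul_eq {A B C D : Matrix n n R} (hB : IsUnit B.det)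
    (hD : IsUnit D.det) (h : A * D = B * C) : B⁻¹ * A = C * D⁻¹ := by
  calc B⁻¹ * A = B⁻¹ * (A * D) * D⁻¹ := by
        rw [Matrix.mul_assoc, Matrix.mul_assoc, mul_nonsing_inv _ hD, Matrix.mul_one]
    _ = C * D⁻¹ := by rw [h, ← Matrix.mul_assoc, nonsing_inv_mul _ hB, Matrix.one_mul]

end Matrix

namespace ImproperAffineSphere

variable {K : Type*} [Field K]

def Fplus (a b c lam : K) : Matrix (Fin 3) (Fin 3) K :=
  !![1, 0, 0; b * lam, 1, 0; c * lam ^ 2, a * lam, 1]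

def Gminus (r s t lam : K) : Matrix (Fin 3) (Fin 3) K :=
  !![1, s * lam⁻¹, 0; 0, 1, 0; r * lam⁻¹, t * lam⁻¹ ^ 2, 1]

def Vplus (a b c s lam : K) : Matrix (Fin 3) (Fin 3) K :=
  !![1, 0, 0;
     b * (1 - b * s)⁻¹ * lam, 1, 0;
     c * (1 - b * s)⁻¹ * lam ^ 2, (a - s * (a * b - c)) * lam, 1]

def Vminus (b r s t lam : K) : Matrix (Fin 3) (Fin 3) K :=
  !![(1 - b * s)⁻¹, s * lam⁻¹, 0;
     0, 1 - b * s, 0;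
     (r + b * t * (1 - b * s)⁻¹) * lam⁻¹, t * lam⁻¹ ^ 2, 1]

theorem det_Gminus (r s t lam : K) : (Gminus r s t lam).det = 1 := by
  simp [Gminus, Matrix.det_fin_three]

theorem det_Vplus (a b c s lam : K) : (Vplus a b c s lam).det = 1 := by
  simp [Vplus, Matrix.det_fin_three]

theorem det_Vminus {b s : K} (hbs : 1 - b * s ≠ 0) (r t lam : K) :
    (Vminus b r s t lam).det = 1 := by
  simp [Vminus, Matrix.det_fin_three, hbs]

theorem Fplus_mul_Vminus {lam b s : K} (hlam : lam ≠ 0) (hbs : 1 - b * s ≠ 0) (a c r t : K) :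
    Fplus a b c lam * Vminus b r s t lam = Gminus r s t lam * Vplus a b c s lam := by
  ext i j
  fin_cases i <;> fin_cases j <;>
    simp [Fplus, Gminus, Vplus, Vminus, Matrix.mul_apply, Fin.sum_univ_succ] <;>
    field_simp <;> ring

end ImproperAffineSphere

open ImproperAffineSphere in
theorem stmt10_general (lam : ℝ) (hlam : lam ≠ 0)
    (a b c r s t : ℤ → ℝ)
    (Fp Gm : ℤ → Matrix (Fin 3) (Fin 3) ℝ)
    (hFp : ∀ n, Fp n = !![1, 0, 0;
                          b n * lam, 1, 0;
                          c n * lam ^ 2, a n * lam, 1])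
    (hGm : ∀ m, Gm m = !![1, s m * lam⁻¹, 0;
                          0, 1, 0;
                          r m * lam⁻¹, t m * lam⁻¹ ^ 2, 1])
    (n m : ℤ) (hbs : 1 - b n * s m ≠ 0)
    (Vp Vm : Matrix (Fin 3) (Fin 3) ℝ)
    (hVp : Vp = !![1, 0, 0;
                   b n * (1 - b n * s m)⁻¹ * lam, 1, 0;
                   c n * (1 - b n * s m)⁻¹ * lam ^ 2,
                     (a n - s m * (a n * b n - c n)) * lam, 1])
    (hVm : Vm = !![(1 - b n * s m)⁻¹, s m * lam⁻¹, 0;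
                   0, 1 - b n * s m, 0;
                   (r m + b n * t m * (1 - b n * s m)⁻¹) * lam⁻¹, t m * lam⁻¹ ^ 2, 1]) :
    Fp n * Vm = Gm m * Vp ∧ (Gm m)⁻¹ * Fp n = Vp * Vm⁻¹ ∧
      Vp.det = 1 ∧ Vm.det = 1 := by
  have hF : Fp n = Fplus (a n) (b n) (c n) lam := hFp n
  have hG : Gm m = Gminus (r m) (s m) (t m) lam := hGm m
  have hVp' : Vp = Vplus (a n) (b n) (c n) (s m) lam := hVp
  have hVm' : Vm = Vminus (b n) (r m) (s m) (t m) lam := hVm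
  rw [hF, hG, hVp', hVm']
  have hmul := Fplus_mul_Vminus hlam hbs (a n) (c n) (r m) (t m)
  have hdetVm := det_Vminus hbs (r m) (t m) lam
  refine ⟨hmul, ?_, det_Vplus _ _ _ _ _, hdetVm⟩
  refine Matrix.inv_mul_eq_mul_inv_of_mul_eq ?_ ?_ hmul
  · rw [det_Gminus]; exact isUnit_one
  · rw [hdetVm]; exact isUnit_one

/-- Explicit Birkhoff decomposition `(G⁻_m)⁻¹ F⁺_n = V⁺_{n,m} (V⁻_{n,m})⁻¹` on the big cell
`1 − b_n s_m ≠ 0` for discrete indefinite improper affine spheres. -/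
theorem stmt10 (ε δ : ℝ) (hε : 0 < ε) (hδ : 0 < δ) (lam : ℝ) (hlam : lam ≠ 0)
    (α β ρ σ : ℤ → ℝ)
    (a b c r s t : ℤ → ℝ)
    (ha : ∀ n, a n = ε * bsum α n)
    (hb : ∀ n, b n = ε * bsum β n)
    (hc : ∀ n, c n = ε * bsum (fun k => a k * β k) n)
    (hr : ∀ m, r m = δ * bsum ρ m)
    (hs : ∀ m, s m = δ * bsum σ m)
    (ht : ∀ m, t m = δ * bsum (fun k => r k * σ k) m)
    (Fp Gm : ℤ → Matrix (Fin 3) (Fin 3) ℝ)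
    (hFp : ∀ n, Fp n = !![1, 0, 0;
                          b n * lam, 1, 0;
                          c n * lam ^ 2, a n * lam, 1])
    (hGm : ∀ m, Gm m = !![1, s m * lam⁻¹, 0;
                          0, 1, 0;
                          r m * lam⁻¹, t m * lam⁻¹ ^ 2, 1])
    (n m : ℤ) (hbs : 1 - b n * s m ≠ 0)
    (Vp Vm : Matrix (Fin 3) (Fin 3) ℝ)
    (hVp : Vp = !![1, 0, 0;
                   b n * (1 - b n * s m)⁻¹ * lam, 1, 0;
                   c n * (1 - b n * s m)⁻¹ * lam ^ 2,
                     (a n - s m * (a n * b n - c n)) * lam, 1])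
    (hVm : Vm = !![(1 - b n * s m)⁻¹, s m * lam⁻¹, 0;
                   0, 1 - b n * s m, 0;
                   (r m + b n * t m * (1 - b n * s m)⁻¹) * lam⁻¹, t m * lam⁻¹ ^ 2, 1]) :
    Fp n * Vm = Gm m * Vp ∧ (Gm m)⁻¹ * Fp n = Vp * Vm⁻¹ ∧
      Vp.det = 1 ∧ Vm.det = 1 :=
  stmt10_general lam hlam a b c r s t Fp Gm hFp hGm n m hbs Vp Vm hVp hVm
end

section
/- Let γ¹ : ℤ → ℝ² and γ² : ℤ → ℝ² be two discrete plane curves, and define z^m_n = det[γ¹_n, γ²_m] + Σ_k^n det[γ¹_{k−1}, γ¹_k] − Σ_k^m det[γ²_{k−1}, γ²_k] (bidirectional sums) and f^m_n = (γ¹_n + γ²_m, z^m_n) ∈ ℝ³. Then for all (n, m) ∈ ℤ²: f^{m+1}_{n+1} − f^m_{n+1} − f^{m+1}_n + f^m_n = det[γ¹_{n+1} − γ¹_n, γ²_{m+1} − γ²_m] · (0, 0, 1). In particular, whenever this vector is nonzero, the line through the points f^{m+1}_{n+1} + f^m_n and f^m_{n+1} + f^{m+1}_n is parallel to (0,0,1),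 so all such lines are parallel to each other. -/
theorem det2_sub_sub_sub_add (a a' b b' : ℝ × ℝ) :
    det2 a' b' - det2 a' b - det2 a b' + det2 a b = det2 (a' - a) (b' - b) := by
  simp only [det2, Prod.fst_sub, Prod.snd_sub]
  ring

theorem mixed_diff_eq_det2_of_eq_det2_add_sub {γ₁ γ₂ : ℤ → ℝ × ℝ} {u v : ℤ → ℝ}
    {z : ℤ → ℤ → ℝ} (hz : ∀ n m, z n m = det2 (γ₁ n) (γ₂ m) + u n - v m) (n m : ℤ) :
    z (n+1) (m+1) - z (n+1) m - z n (m+1) + z n m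
      = det2 (γ₁ (n+1) - γ₁ n) (γ₂ (m+1) - γ₂ m) := by
  rw [← det2_sub_sub_sub_add, hz, hz, hz, hz]
  ring

-- `f n m` and `z n m` stand for the paper's `f^m_n` and `z^m_n`.
/-- For `f^m_n = (γ¹_n + γ²_m, z^m_n)` built from two discrete plane curves, the mixed second
difference is `det[γ¹_{n+1} − γ¹_n, γ²_{m+1} − γ²_m]·(0,0,1)`; in particular the segment from
`f^m_{n+1} + f^{m+1}_n` to `f^{m+1}_{n+1} + f^m_n` is parallel to `(0,0,1)`.
Here `f n m` denotes `f^m_n` and `z n m` denotes `z^m_n`. -/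
theorem stmt13 (γ₁ γ₂ : ℤ → ℝ × ℝ)
    (z : ℤ → ℤ → ℝ)
    (hz : ∀ n m, z n m = det2 (γ₁ n) (γ₂ m)
      + bsum (fun k => det2 (γ₁ (k-1)) (γ₁ k)) n
      - bsum (fun k => det2 (γ₂ (k-1)) (γ₂ k)) m)
    (f : ℤ → ℤ → (Fin 3 → ℝ))
    (hf : ∀ n m, f n m = ![(γ₁ n).1 + (γ₂ m).1, (γ₁ n).2 + (γ₂ m).2, z n m]) :
    ∀ n m : ℤ,
      f (n+1) (m+1) - f (n+1) m - f n (m+1) + f n m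
        = det2 (γ₁ (n+1) - γ₁ n) (γ₂ (m+1) - γ₂ m) • ![(0:ℝ), 0, 1] ∧
      ∃ cval : ℝ, (f (n+1) (m+1) + f n m) - (f (n+1) m + f n (m+1))
        = cval • ![(0:ℝ), 0, 1] := by
  intro n m
  have hmixed : f (n+1) (m+1) - f (n+1) m - f n (m+1) + f n m
      = det2 (γ₁ (n+1) - γ₁ n) (γ₂ (m+1) - γ₂ m) • ![(0:ℝ), 0, 1] := by
    rw [← mixed_diff_eq_det2_of_eq_det2_add_sub hz]
    ext i
    fin_cases i <;> simp only [hf, Fin.zero_eta, Fin.mk_one, Fin.reduceFinMk, Pi.add_apply,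
      Pi.sub_apply, Pi.smul_apply, Matrix.cons_val_zero, Matrix.cons_val_one, Matrix.cons_val,
      smul_eq_mul, mul_zero, mul_one] <;> ring
  refine ⟨hmixed, det2 (γ₁ (n+1) - γ₁ n) (γ₂ (m+1) - γ₂ m), ?_⟩
  rw [← hmixed]
  abel
end

section
/- Let ε, δ > 0, let A, B : ℤ → ℝ be arbitrary sequences, and let α, ρ : ℤ → ℝ be sequences with no zeros. Define ω^m_n = α_{n+1} ρ_{m+1} · ( 1 − εδ · (Σ_k^n A_k/(α_{k+1}α_k)) · (Σ_l^m B_l/(ρ_{l+1}ρ_l)) ) (bidirectional sums). Then for all (n, m) ∈ ℤ²: ω^{m+1}_{n+1} ω^m_n − ω^m_{n+1} ω^{m+1}_n + εδ A_{n+1} B_{m+1} = 0; that is, ω is a solution of the discrete Liouville equation with data A, B. -/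
open Finset

namespace bsum

variable (x : ℤ → ℝ) {n : ℤ}

theorem eq_sum_Icc_of_nonneg (hn : 0 ≤ n) : bsum x n = ∑ k ∈ Icc 1 n, x k := by
  rcases hn.eq_or_lt with rfl | hn
  · simp [bsum]
  · exact if_pos hn

theorem eq_neg_sum_Icc_of_nonpos (hn : n ≤ 0) : bsum x n = -∑ k ∈ Icc (n + 1) 0, x k := by
  rcases hn.eq_or_lt with rfl | hn
  · simp [bsum]
  · simp [bsum, show ¬1 ≤ n by omega, hn.ne]

theorem succ (n : ℤ) : bsum x (n + 1) = bsum x n + x (n + 1) := by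
  rcases le_or_gt 0 n with hn | hn
  · have hIcc : insert (n + 1) (Icc 1 n) = Icc 1 (n + 1) := by
      simpa [Order.succ_eq_add_one] using insert_Icc_right_eq_Icc_succ (a := (1 : ℤ)) (b := n)
        (by rw [Order.succ_eq_add_one]; omega)
    rw [eq_sum_Icc_of_nonneg x hn, eq_sum_Icc_of_nonneg x (by omega), ← hIcc,
      sum_insert (by simp), add_comm]
  · have hIcc : insert (n + 1) (Icc (n + 1 + 1) 0) = Icc (n + 1) 0 := by
      simpa [Order.succ_eq_add_one] using
        insert_Icc_succ_left_eq_Icc (a := n + 1) (b := (0 : ℤ)) (by omega)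
    rw [eq_neg_sum_Icc_of_nonpos x (by omega), eq_neg_sum_Icc_of_nonpos x hn.le, ← hIcc,
      sum_insert (by simp)]
    ring

theorem mul_mul_succ_sub (A α : ℤ → ℝ) (n : ℤ) (h₁ : α (n + 1) ≠ 0) (h₂ : α (n + 1 + 1) ≠ 0) :
    α (n + 1 + 1) * α (n + 1) *
      (bsum (fun k => A k / (α (k + 1) * α k)) (n + 1) -
        bsum (fun k => A k / (α (k + 1) * α k)) n) = A (n + 1) := by
  rw [succ, add_sub_cancel_left]
  field_simp

end bsum

theorem det_eq_of_eq_mul_one_sub_mul {R : Type*} [CommRing R] (c : R) (f g S T : ℤ → R)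
    (ω : ℤ → ℤ → R) (hω : ∀ n m, ω n m = f n * g m * (1 - c * S n * T m)) (n m : ℤ) :
    ω (n + 1) (m + 1) * ω n m - ω (n + 1) m * ω n (m + 1) =
      -c * (f (n + 1) * f n * (S (n + 1) - S n)) * (g (m + 1) * g m * (T (m + 1) - T m)) := by
  simp only [hω]
  ring

theorem stmt15_general (ε δ : ℝ)
    (A B α ρ : ℤ → ℝ) (hα : ∀ n, α n ≠ 0) (hρ : ∀ m, ρ m ≠ 0)
    (ω : ℤ → ℤ → ℝ)
    (hω : ∀ n m, ω n m = α (n+1) * ρ (m+1) *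
      (1 - ε * δ * bsum (fun k => A k / (α (k+1) * α k)) n
        * bsum (fun l => B l / (ρ (l+1) * ρ l)) m)) :
    ∀ n m : ℤ,
      ω (n+1) (m+1) * ω n m - ω (n+1) m * ω n (m+1)
        + ε * δ * A (n+1) * B (m+1) = 0 := by
  intro n m
  rw [det_eq_of_eq_mul_one_sub_mul (ε * δ) _ _ _ _ ω hω,
    bsum.mul_mul_succ_sub A α n (hα _) (hα _), bsum.mul_mul_succ_sub B ρ m (hρ _) (hρ _)]
  ring

/-- The multiplicative general solution
`ω^m_n = α_{n+1}ρ_{m+1}(1 − εδ (Σ_k^n A_k/(α_{k+1}α_k)) (Σ_l^m B_l/(ρ_{l+1}ρ_l)))`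
of the discrete Liouville equation with data `A`, `B`.  Here `ω n m` denotes `ω^m_n`. -/
theorem stmt15 (ε δ : ℝ) (hε : 0 < ε) (hδ : 0 < δ)
    (A B α ρ : ℤ → ℝ) (hα : ∀ n, α n ≠ 0) (hρ : ∀ m, ρ m ≠ 0)
    (ω : ℤ → ℤ → ℝ)
    (hω : ∀ n m, ω n m = α (n+1) * ρ (m+1) *
      (1 - ε * δ * bsum (fun k => A k / (α (k+1) * α k)) n
        * bsum (fun l => B l / (ρ (l+1) * ρ l)) m)) :
    ∀ n m : ℤ,
      ω (n+1) (m+1) * ω n m - ω (n+1) m * ω n (m+1)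
        + ε * δ * A (n+1) * B (m+1) = 0 :=
  stmt15_general ε δ A B α ρ hα hρ ω hω
end
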